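/- Let G be a cycle of length n ≥ 3. Then J_G is a prime ideal if and only if n = 3. -/

import Mathlib

open MvPolynomial

/-- The binomial `f_{ab} = x_a y_b - x_b y_a` in `K[x_1,…,x_n,y_1,…,y_n]`. -/
noncomputable def edgeBinomial (K : Type*) [Field K] {n : ℕ} (a b : Fin n) :
    MvPolynomial (Fin n ⊕ Fin n) K :=
  X (Sum.inl a) * X (Sum.inr b) - X (Sum.inl b) * X (Sum.inr a)

/-- The binomial edge ideal `J_G` of a simple graph `G` on `[n]`. -/
noncomputable def binomialEdgeIdeal (K : Type*) [Field K] {n : ℕ}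
    (G : SimpleGraph (Fin n)) : Ideal (MvPolynomial (Fin n ⊕ Fin n) K) :=
  Ideal.span {p | ∃ i j : Fin n, G.Adj i j ∧ i < j ∧ p = edgeBinomial K i j}

/-! For a cycle of length at least four, `0 — 1 — 2` is an induced path and
`x₁ f₀₂ = x₀ f₁₂ + x₂ f₀₁ ∈ J_G`, while neither `x₁` nor `f₀₂` lies in `J_G` (evaluate at suitable
points), so `J_G` is not prime. The 3-cycle is complete, and the binomial edge ideal of a complete
graph is the kernel of the monomial map `x_i ↦ s t_i`, `y_i ↦ t_i`: the kernel of a monomial map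
is spanned by the differences of monomials with the same image, and any two monomials with the same
image are connected by exchanges `x_i y_j ↦ x_j y_i`; being the kernel of a map to a domain, it
is prime. -/

open Finset

theorem AddMonoidAlgebra.ker_mapDomainRingHom_le {R M N : Type*} [Ring R] [AddMonoid M]
    [AddMonoid N] (E : M →+ N) {I : Ideal (AddMonoidAlgebra R M)}
    (hI : ∀ m m', E m = E m' → single m (1 : R) - single m' 1 ∈ I) :
    RingHom.ker (mapDomainRingHom R E) ≤ I := by
  -- `invFun E ∘ E` replaces each monomial by a fixed representative of its fibre
  have key (x : AddMonoidAlgebra R M) :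
      x - mapDomain (Function.invFun E) (mapDomain E x) ∈ I := by
    induction x using AddMonoidAlgebra.induction_linear with
    | zero => simp
    | add x y hx hy => simpa [mapDomain_add, add_sub_add_comm] using I.add_mem hx hy
    | single m r =>
      have hE : E (Function.invFun E (E m)) = E m := Function.invFun_eq ⟨m, rfl⟩
      simpa [mapDomain_single, mul_sub, single_mul_single] using
        I.mul_mem_left (single 0 r) (hI _ _ hE.symm)
  intro x hx
  have hx' : mapDomain E x = 0 := hx
  simpa [hx'] using key x

section

variable {n : ℕ}

noncomputable def exponentXY (i j : Fin n) : (Fin n ⊕ Fin n) →₀ ℕ :=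
  Finsupp.single (.inl i) 1 + Finsupp.single (.inr j) 1

@[simp] lemma exponentXY_inl (i j k : Fin n) :
    exponentXY i j (.inl k) = if i = k then 1 else 0 := by
  simp [exponentXY, Finsupp.single_apply]

@[simp] lemma exponentXY_inr (i j k : Fin n) :
    exponentXY i j (.inr k) = if j = k then 1 else 0 := by
  simp [exponentXY, Finsupp.single_apply]

/-- Exponents of the monomial map `x_i ↦ s t_i`, `y_i ↦ t_i`, with `s` the variable `none`. -/
noncomputable def segreExponent (n : ℕ) : ((Fin n ⊕ Fin n) →₀ ℕ) →+ (Option (Fin n) →₀ ℕ) where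
  toFun d := Finsupp.equivFunOnFinite.symm fun
    | none => ∑ k, d (.inl k)
    | some k => d (.inl k) + d (.inr k)
  map_zero' := by ext (_ | _) <;> simp
  map_add' d d' := by ext (_ | _) <;> simp [sum_add_distrib, add_add_add_comm]

@[simp] lemma segreExponent_none (d : (Fin n ⊕ Fin n) →₀ ℕ) :
    segreExponent n d none = ∑ k, d (.inl k) := rfl

@[simp] lemma segreExponent_some (d : (Fin n ⊕ Fin n) →₀ ℕ) (k : Fin n) :
    segreExponent n d (some k) = d (.inl k) + d (.inr k) := rfl

lemma segreExponent_exponentXY_comm (i j : Fin n) :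
    segreExponent n (exponentXY i j) = segreExponent n (exponentXY j i) := by
  ext (_ | k)
  · simp
  · simp only [segreExponent_some, exponentXY_inl, exponentXY_inr]
    split_ifs <;> subst_vars <;> omega

lemma eq_of_segreExponent_eq_of_le {d d' : (Fin n ⊕ Fin n) →₀ ℕ}
    (h : segreExponent n d = segreExponent n d') (hle : ∀ k, d (.inl k) ≤ d' (.inl k)) :
    d = d' := by
  have heq := (sum_eq_sum_iff_of_le fun k _ ↦ hle k).1 (by simpa using congr($h none))
  ext (k | k)
  · exact heq k (mem_univ k)
  · have := congr($h (some k))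
    simp only [segreExponent_some, heq k (mem_univ k)] at this
    omega

end

section

variable (K : Type*) [Field K] {n : ℕ}

lemma edgeBinomial_eq_monomial_sub (i j : Fin n) :
    edgeBinomial K i j = monomial (exponentXY i j) 1 - monomial (exponentXY j i) 1 := by
  simp [edgeBinomial, exponentXY, X, monomial_mul]

lemma edgeBinomial_swap (i j : Fin n) : edgeBinomial K j i = -edgeBinomial K i j := by
  simp [edgeBinomial]

lemma edgeBinomial_mem_binomialEdgeIdeal {G : SimpleGraph (Fin n)} {i j : Fin n} (h : G.Adj i j) :
    edgeBinomial K i j ∈ binomialEdgeIdeal K G := by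
  rcases lt_or_gt_of_ne h.ne with hij | hji
  · exact Ideal.subset_span ⟨i, j, h, hij, rfl⟩
  · rw [edgeBinomial_swap]
    exact neg_mem (Ideal.subset_span ⟨j, i, h.symm, hji, rfl⟩)

lemma edgeBinomial_mem_binomialEdgeIdeal_top (i j : Fin n) :
    edgeBinomial K i j ∈ binomialEdgeIdeal K ⊤ := by
  by_cases hij : i = j
  · simp [hij, edgeBinomial]
  · exact edgeBinomial_mem_binomialEdgeIdeal K hij

lemma monomial_add_exponentXY_sub_mem (r : (Fin n ⊕ Fin n) →₀ ℕ) (i j : Fin n) :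
    monomial (r + exponentXY i j) (1 : K) - monomial (r + exponentXY j i) 1
      ∈ binomialEdgeIdeal K ⊤ := by
  simpa [edgeBinomial_eq_monomial_sub, mul_sub, monomial_mul] using
    Ideal.mul_mem_left _ (monomial r 1) (edgeBinomial_mem_binomialEdgeIdeal_top K i j)

theorem monomial_sub_mem_of_segreExponent_eq (d d' : (Fin n ⊕ Fin n) →₀ ℕ)
    (h : segreExponent n d = segreExponent n d') :
    monomial d (1 : K) - monomial d' 1 ∈ binomialEdgeIdeal K ⊤ := by
  have hrow : ∑ k, d (.inl k) = ∑ k, d' (.inl k) := by simpa using congr($h none)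
  have hcol (k : Fin n) : d (.inl k) + d (.inr k) = d' (.inl k) + d' (.inr k) := by
    simpa using congr($h (some k))
  by_cases hle : ∀ k, d (.inl k) ≤ d' (.inl k)
  · simp [eq_of_segreExponent_eq_of_le h hle]
  push Not at hle
  obtain ⟨i, hi⟩ := hle
  obtain ⟨j, hj⟩ : ∃ j, d (.inl j) < d' (.inl j) := by
    by_contra! hge
    have := (sum_eq_sum_iff_of_le fun k _ ↦ hge k).1 hrow.symm i (mem_univ i)
    omega
  have hij : i ≠ j := by rintro rfl; omega
  have hdiv : exponentXY i j ≤ d := by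
    rintro (k | k)
    · simp only [exponentXY_inl]; split_ifs <;> subst_vars <;> omega
    · have := hcol j; simp only [exponentXY_inr]; split_ifs <;> subst_vars <;> omega
  obtain ⟨r, hr⟩ : ∃ r, d = r + exponentXY i j :=
    ⟨d - exponentXY i j, (tsub_add_cancel_of_le hdiv).symm⟩
  -- exchanging `x_i y_j` for `x_j y_i` lowers the excess of `x`-exponents of `d` over `d'`
  have hlt : ∑ k, ((r + exponentXY j i) (.inl k) - d' (.inl k)) <
      ∑ k, (d (.inl k) - d' (.inl k)) := by
    subst hr
    simp only [Finsupp.coe_add, Pi.add_apply, exponentXY_inl] at hi hj ⊢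
    simp only [hij, if_true, if_false] at hi hj
    apply sum_lt_sum
    · intro k _
      split_ifs <;> subst_vars <;> omega
    · exact ⟨i, mem_univ i, by simp [hij.symm]; omega⟩
  have hnext := monomial_sub_mem_of_segreExponent_eq (r + exponentXY j i) d'
    (by rw [map_add, ← segreExponent_exponentXY_comm, ← map_add, ← hr, h])
  simpa [hr] using Ideal.add_mem _ (monomial_add_exponentXY_sub_mem K r i j) hnext
termination_by ∑ k, (d (.inl k) - d' (.inl k))
decreasing_by exact hlt

end

section

variable (K : Type*) [Field K] (n : ℕ)

noncomputable def segreHom :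
    MvPolynomial (Fin n ⊕ Fin n) K →+* MvPolynomial (Option (Fin n)) K :=
  AddMonoidAlgebra.mapDomainRingHom K (segreExponent n)

lemma segreHom_monomial (d : (Fin n ⊕ Fin n) →₀ ℕ) (a : K) :
    segreHom K n (monomial d a) = monomial (segreExponent n d) a := by
  simp [segreHom, ← single_eq_monomial]

theorem binomialEdgeIdeal_top_eq_ker_segreHom :
    binomialEdgeIdeal K (⊤ : SimpleGraph (Fin n)) = RingHom.ker (segreHom K n) := by
  refine le_antisymm ?_ ?_
  · refine Ideal.span_le.2 ?_
    rintro _ ⟨i, j, -, -, rfl⟩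
    simp [RingHom.mem_ker, edgeBinomial_eq_monomial_sub, segreHom_monomial,
      segreExponent_exponentXY_comm]
  · refine AddMonoidAlgebra.ker_mapDomainRingHom_le _ fun d d' h ↦ ?_
    simpa [single_eq_monomial] using monomial_sub_mem_of_segreExponent_eq K d d' h

theorem binomialEdgeIdeal_top_isPrime :
    (binomialEdgeIdeal K (⊤ : SimpleGraph (Fin n))).IsPrime := by
  rw [binomialEdgeIdeal_top_eq_ker_segreHom]
  exact RingHom.ker_isPrime _

end

section

variable (K : Type*) [Field K] {n : ℕ} {G : SimpleGraph (Fin n)}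

lemma X_mul_edgeBinomial_mem_binomialEdgeIdeal {i j k : Fin n} (hij : G.Adj i j)
    (hjk : G.Adj j k) :
    X (.inl j) * edgeBinomial K i k ∈ binomialEdgeIdeal K G := by
  have : X (.inl j) * edgeBinomial K i k =
      X (.inl i) * edgeBinomial K j k + X (.inl k) * edgeBinomial K i j := by
    simp only [edgeBinomial]; ring
  rw [this]
  exact add_mem (Ideal.mul_mem_left _ _ (edgeBinomial_mem_binomialEdgeIdeal K hjk))
    (Ideal.mul_mem_left _ _ (edgeBinomial_mem_binomialEdgeIdeal K hij))

lemma binomialEdgeIdeal_le_ker_eval {p : Fin n ⊕ Fin n → K}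
    (hp : ∀ i j, G.Adj i j → eval p (edgeBinomial K i j) = 0) :
    binomialEdgeIdeal K G ≤ RingHom.ker (eval p) :=
  Ideal.span_le.2 <| by
    rintro _ ⟨i, j, h, -, rfl⟩
    exact hp i j h

lemma X_notMem_binomialEdgeIdeal (v : Fin n ⊕ Fin n) : X v ∉ binomialEdgeIdeal K G := by
  intro hv
  have := binomialEdgeIdeal_le_ker_eval K (p := fun _ ↦ 1) (by simp [edgeBinomial]) hv
  simp at this

lemma edgeBinomial_notMem_binomialEdgeIdeal {i k : Fin n} (hik : i ≠ k) (h : ¬G.Adj i k) :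
    edgeBinomial K i k ∉ binomialEdgeIdeal K G := by
  intro hmem
  have hp : ∀ a b, G.Adj a b →
      eval (Sum.elim (Pi.single k 1) (Pi.single i 1)) (edgeBinomial K a b) = 0 := by
    intro a b hab
    simp only [edgeBinomial, map_sub, map_mul, eval_X, Sum.elim_inl, Sum.elim_inr,
      Pi.single_apply]
    split_ifs <;> subst_vars <;> simp_all [G.adj_comm]
  have := binomialEdgeIdeal_le_ker_eval K hp hmem
  simp [edgeBinomial, hik, hik.symm] at this

theorem not_isPrime_binomialEdgeIdeal_of_adj_of_adj {i j k : Fin n} (hij : G.Adj i j)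
    (hjk : G.Adj j k) (hik : i ≠ k) (hnik : ¬G.Adj i k) :
    ¬(binomialEdgeIdeal K G).IsPrime := fun hP ↦
  (hP.mem_or_mem (X_mul_edgeBinomial_mem_binomialEdgeIdeal K hij hjk)).elim
    (X_notMem_binomialEdgeIdeal K _) (edgeBinomial_notMem_binomialEdgeIdeal K hik hnik)

theorem not_isPrime_binomialEdgeIdeal_cycleGraph (m : ℕ) :
    ¬(binomialEdgeIdeal K (SimpleGraph.cycleGraph (m + 4))).IsPrime := by
  refine not_isPrime_binomialEdgeIdeal_of_adj_of_adj K (i := ⟨0, by omega⟩) (j := ⟨1, by omega⟩)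
    (k := ⟨2, by omega⟩) ?_ ?_ (by simp) ?_
  · exact SimpleGraph.pathGraph_le_cycleGraph (by simp [SimpleGraph.pathGraph_adj])
  · exact SimpleGraph.pathGraph_le_cycleGraph (by simp [SimpleGraph.pathGraph_adj])
  · rw [SimpleGraph.cycleGraph_adj', Fin.coe_sub_iff_lt.2 (by simp [Fin.lt_def]),
      Fin.coe_sub_iff_le.2 (by simp)]
    simp

end

/-- For the cycle `G` of length `n ≥ 3`, the binomial edge ideal `J_G` is prime if and
only if `n = 3`. -/
theorem binomialEdgeIdeal_cycleGraph_isPrime_iff (K : Type*) [Field K] {n : ℕ}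
    (hn : 3 ≤ n) :
    (binomialEdgeIdeal K (SimpleGraph.cycleGraph n)).IsPrime ↔ n = 3 := by
  refine ⟨fun hP ↦ ?_, ?_⟩
  · by_contra hn3
    obtain ⟨m, rfl⟩ : ∃ m, n = m + 4 := ⟨n - 4, by omega⟩
    exact not_isPrime_binomialEdgeIdeal_cycleGraph K m hP
  · rintro rfl
    rw [SimpleGraph.cycleGraph_three_eq_top]
    exact binomialEdgeIdeal_top_isPrime K 3
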